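/- If every doctor and every hospital has interview capacity exactly one, then the arrangement is globally adequate: for every preference profile, the two-step matching outcome is stable. -/
import Mathlib


/- Formal model of the two-step interview-then-match process of
Echenique-et-al-style markets: Step 1 computes the interview matching by
hospital-proposing deferred acceptance (with responsive, capacity-constrained
choice functions); Step 2 computes the final one-to-one matching by
doctor-proposing deferred acceptance on preferences restricted to interview
partners. -/

open Finset

section Model

variable {D H : Type*} [Fintype D] [Fintype H] [DecidableEq D] [DecidableEq H]

/-- The (at most) `n` best elements of `s` according to `rank` (lower rank = better). -/
def topN {α : Type*} [DecidableEq α] (rank : α → ℕ) (n : ℕ) (s : Finset α) : Finset α :=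
  s.filter fun x => (s.filter fun y => rank y < rank x).card < n

/-- A market: strict preferences represented by rank functions
(lower rank = more preferred) together with acceptability predicates. -/
structure Market (D H : Type*) where
  rankDH : D → H → ℕ
  accD : D → H → Bool
  rankHD : H → D → ℕ
  accH : H → D → Bool

/-- Strict preferences: rank functions are injective. -/
def Market.Strict (M : Market D H) : Prop :=
  (∀ d, Function.Injective (M.rankDH d)) ∧ (∀ h, Function.Injective (M.rankHD h))

/-- Hospital `h` proposes to its `ι h` best acceptable doctors that have not rejected it. -/
def hProps (M : Market D H) (ι : H → ℕ) (R : Finset (H × D)) (h : H) : Finset D :=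
  topN (M.rankHD h) (ι h) (univ.filter fun d => M.accH h d ∧ (h, d) ∉ R)

/-- Doctor `d` keeps her `κ d` best acceptable proposals. -/
def dKeeps (M : Market D H) (ι : H → ℕ) (κ : D → ℕ) (R : Finset (H × D)) (d : D) :
    Finset H :=
  topN (fun h => M.rankDH d h) (κ d) (univ.filter fun h => M.accD d h ∧ d ∈ hProps M ι R h)

/-- One round of hospital-proposing deferred acceptance: the (cumulative) rejection set
grows by the proposals not kept. -/
def iStep (M : Market D H) (ι : H → ℕ) (κ : D → ℕ) (R : Finset (H × D)) :
    Finset (H × D) :=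
  R ∪ univ.filter fun p : H × D => p.2 ∈ hProps M ι R p.1 ∧ p.1 ∉ dKeeps M ι κ R p.2

/-- Rejection set at the end of hospital-proposing DA (interview step). -/
def iRej (M : Market D H) (ι : H → ℕ) (κ : D → ℕ) : Finset (H × D) :=
  (iStep M ι κ)^[Fintype.card D * Fintype.card H] ∅

/-- The interview matching (the hospital-optimal stable many-to-many matching) computed
by hospital-proposing deferred acceptance: pairs `(h, d)` such that `h` interviews `d`. -/
def interviews (M : Market D H) (ι : H → ℕ) (κ : D → ℕ) : Finset (H × D) :=
  univ.filter fun p : H × D =>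
    p.2 ∈ hProps M ι (iRej M ι κ) p.1 ∧ p.1 ∈ dKeeps M ι κ (iRej M ι κ) p.2

/-- Doctor `d` proposes to her best interview partner that has not rejected her. -/
def dProps (M : Market D H) (V : Finset (H × D)) (S : Finset (D × H)) (d : D) :
    Finset H :=
  topN (M.rankDH d) 1 (univ.filter fun h => (h, d) ∈ V ∧ (d, h) ∉ S)

/-- Hospital `h` keeps its best proposal. -/
def hKeeps (M : Market D H) (V : Finset (H × D)) (S : Finset (D × H)) (h : H) :
    Finset D :=
  topN (M.rankHD h) 1 (univ.filter fun d => h ∈ dProps M V S d)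

/-- One round of doctor-proposing DA on preferences restricted to the interview matching `V`. -/
def mStep (M : Market D H) (V : Finset (H × D)) (S : Finset (D × H)) : Finset (D × H) :=
  S ∪ univ.filter fun p : D × H => p.2 ∈ dProps M V S p.1 ∧ p.1 ∉ hKeeps M V S p.2

/-- Rejection set at the end of the doctor-proposing DA of the matching step. -/
def mRej (M : Market D H) (V : Finset (H × D)) : Finset (D × H) :=
  (mStep M V)^[Fintype.card D * Fintype.card H] ∅

/-- The final matching: doctor-proposing DA on preferences restricted to interviews `V`. -/
def finalMatch (M : Market D H) (V : Finset (H × D)) : Finset (D × H) :=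
  univ.filter fun p : D × H =>
    p.2 ∈ dProps M V (mRej M V) p.1 ∧ p.1 ∈ hKeeps M V (mRej M V) p.2

/-- The `(ι,κ)`-matching: the culmination of the two-step process. -/
def ikMatching (M : Market D H) (ι : H → ℕ) (κ : D → ℕ) : Finset (D × H) :=
  finalMatch M (interviews M ι κ)

/-- `(d, h)` is a blocking pair of `μ` (w.r.t. the true, unrestricted preferences). -/
def Blocks (M : Market D H) (μ : Finset (D × H)) (d : D) (h : H) : Prop :=
  M.accD d h ∧ M.accH h d ∧ (d, h) ∉ μ ∧
    (∀ h', (d, h') ∈ μ → M.rankDH d h < M.rankDH d h') ∧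
    (∀ d', (d', h) ∈ μ → M.rankHD h d < M.rankHD h d')

instance (M : Market D H) (μ : Finset (D × H)) (d : D) (h : H) :
    Decidable (Blocks M μ d h) := by
  unfold Blocks; infer_instance

/-- A matching is stable if it admits no blocking pair. -/
def Stable (M : Market D H) (μ : Finset (D × H)) : Prop := ∀ d h, ¬ Blocks M μ d h

/-- `(ι,κ)` is adequate at `M` if the `(ι,κ)`-matching is stable. -/
def Adequate (M : Market D H) (ι : H → ℕ) (κ : D → ℕ) : Prop :=
  Stable M (ikMatching M ι κ)

/-- One-to-one matching (as a set of pairs). -/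
def IsMatching (μ : Finset (D × H)) : Prop :=
  (∀ d h h', (d, h) ∈ μ → (d, h') ∈ μ → h = h') ∧
    (∀ d d' h, (d, h) ∈ μ → (d', h) ∈ μ → d = d')

/-- Common preferences: all doctors rank the hospitals identically, all hospitals rank
the doctors identically, everyone is mutually acceptable (and preferences are strict). -/
def CommonPrefs (M : Market D H) : Prop :=
  M.Strict ∧ (∀ d d', M.rankDH d = M.rankDH d') ∧ (∀ h h', M.rankHD h = M.rankHD h') ∧
    ∀ d h, M.accD d h ∧ M.accH h d

/-- Number of hospitals matched under `μ`. -/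
def matchedHospitals (μ : Finset (D × H)) : ℕ :=
  (univ.filter fun h : H => ∃ d, (d, h) ∈ μ).card

/-- Number of blocking pairs of `μ`. -/
def blockingCount (M : Market D H) (μ : Finset (D × H)) : ℕ :=
  (univ.filter fun p : D × H => Blocks M μ p.1 p.2).card

end Model

/-- `(ι,κ)` is globally adequate: adequate at every (strict) preference profile. -/
def GloballyAdequate (D H : Type*) [Fintype D] [Fintype H] [DecidableEq D] [DecidableEq H]
    (ι : H → ℕ) (κ : D → ℕ) : Prop :=
  ∀ M : Market D H, M.Strict → Adequate M ι κ

section Aux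

variable {D H : Type*} [Fintype D] [Fintype H] [DecidableEq D] [DecidableEq H]

lemma mem_topN {α : Type*} [DecidableEq α] {rank : α → ℕ} {n : ℕ} {s : Finset α} {x : α} :
    x ∈ topN rank n s ↔ x ∈ s ∧ (s.filter fun y => rank y < rank x).card < n := by
  simp [topN]

lemma topN_nonempty {α : Type*} [DecidableEq α] {rank : α → ℕ} {n : ℕ} {s : Finset α}
    (hs : s.Nonempty) (hn : 0 < n) : (topN rank n s).Nonempty := by
  obtain ⟨x, hx, hmin⟩ := s.exists_min_image rank hs
  refine ⟨x, mem_topN.2 ⟨hx, ?_⟩⟩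
  have hemp : s.filter (fun y => rank y < rank x) = ∅ :=
    filter_eq_empty_iff.2 fun {y} hy => not_lt.2 (hmin y hy)
  simp [hemp, hn]

lemma topN_one_min {α : Type*} [DecidableEq α] {rank : α → ℕ} {s : Finset α} {x y : α}
    (hx : x ∈ topN rank 1 s) (hy : y ∈ s) : ¬ rank y < rank x := by
  intro hlt
  have h2 := (mem_topN.1 hx).2
  have hmem : y ∈ s.filter fun y => rank y < rank x := mem_filter.2 ⟨hy, hlt⟩
  have := card_pos.2 ⟨y, hmem⟩
  omega

lemma hProps_mem {M : Market D H} {ι : H → ℕ} {R : Finset (H × D)} {h : H} {d : D}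
    (hd : d ∈ hProps M ι R h) : M.accH h d ∧ (h, d) ∉ R := by
  have := (mem_topN.1 (by simpa only [hProps] using hd)).1
  simpa using this

lemma hProps_mono {M : Market D H} {ι : H → ℕ} {R R' : Finset (H × D)} (hsub : R ⊆ R')
    {h : H} {d : D} (hd : d ∈ hProps M ι R h) (hnot : (h, d) ∉ R') :
    d ∈ hProps M ι R' h := by
  simp only [hProps] at hd ⊢
  obtain ⟨hmem, hcard⟩ := mem_topN.1 hd
  have hacc : M.accH h d := by simpa using (mem_filter.1 hmem).2.1
  refine mem_topN.2 ⟨by simp [hacc, hnot], lt_of_le_of_lt (card_le_card ?_) hcard⟩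
  intro y hy
  simp only [mem_filter, mem_univ, true_and] at hy ⊢
  exact ⟨⟨hy.1.1, fun hm => hy.1.2 (hsub hm)⟩, hy.2⟩

lemma mem_iStep {M : Market D H} {ι : H → ℕ} {κ : D → ℕ} {R : Finset (H × D)} {h : H} {d : D} :
    (h, d) ∈ iStep M ι κ R ↔
      (h, d) ∈ R ∨ (d ∈ hProps M ι R h ∧ h ∉ dKeeps M ι κ R d) := by
  simp [iStep]

/-- If `d` has an acceptable proposal `g` that she does not keep, she keeps a
strictly better acceptable proposal. -/
lemma kept_best {M : Market D H} (hstrict : M.Strict) {ι : H → ℕ} {κ : D → ℕ}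
    (hκ : ∀ d, κ d = 1) {R : Finset (H × D)} {d : D} {g : H}
    (haccg : M.accD d g) (hprop : d ∈ hProps M ι R g) (hnk : g ∉ dKeeps M ι κ R d) :
    ∃ h', M.accD d h' ∧ h' ∈ dKeeps M ι κ R d ∧ d ∈ hProps M ι R h' ∧
      M.rankDH d h' < M.rankDH d g := by
  classical
  have hgT : g ∈ univ.filter fun h : H => M.accD d h ∧ d ∈ hProps M ι R h := by
    simp [haccg, hprop]
  have hne : (dKeeps M ι κ R d).Nonempty := by
    simp only [dKeeps, hκ]
    exact topN_nonempty ⟨g, hgT⟩ one_pos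
  obtain ⟨h', hh'⟩ := hne
  have hh'' : h' ∈ topN (fun h => M.rankDH d h) 1
      (univ.filter fun h : H => M.accD d h ∧ d ∈ hProps M ι R h) := by
    simpa only [dKeeps, hκ] using hh'
  have hh'T := (mem_topN.1 hh'').1
  have hmin : ¬ M.rankDH d g < M.rankDH d h' := topN_one_min hh'' hgT
  have hne' : h' ≠ g := fun he => hnk (he ▸ hh')
  have hrne : M.rankDH d h' ≠ M.rankDH d g := fun he => hne' (hstrict.1 d he)
  have hT : M.accD d h' ∧ d ∈ hProps M ι R h' := by simpa using hh'T
  exact ⟨h', hT.1, hh', hT.2, by omega⟩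

/-- The invariant of hospital-proposing DA with unit doctor capacities:
every rejected acceptable hospital is dominated by a current proposal. -/
def DAInv (M : Market D H) (ι : H → ℕ) (R : Finset (H × D)) : Prop :=
  ∀ h d, (h, d) ∈ R → M.accD d h →
    ∃ h', M.accD d h' ∧ d ∈ hProps M ι R h' ∧ M.rankDH d h' < M.rankDH d h

lemma inv_step {M : Market D H} (hstrict : M.Strict) {ι : H → ℕ} {κ : D → ℕ}
    (hκ : ∀ d, κ d = 1) {R : Finset (H × D)} (hInv : DAInv M ι R) :
    DAInv M ι (iStep M ι κ R) := by
  have surv : ∀ (d : D) (g : H), d ∈ hProps M ι R g → g ∈ dKeeps M ι κ R d →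
      d ∈ hProps M ι (iStep M ι κ R) g := by
    intro d g hp hk
    refine hProps_mono subset_union_left hp ?_
    intro hmem
    rcases mem_iStep.1 hmem with hin | ⟨_, hnk⟩
    · exact (hProps_mem hp).2 hin
    · exact hnk hk
  have helper : ∀ (d : D) (g : H), M.accD d g → d ∈ hProps M ι R g →
      ∃ h', M.accD d h' ∧ d ∈ hProps M ι (iStep M ι κ R) h' ∧
        M.rankDH d h' ≤ M.rankDH d g := by
    intro d g hacc hp
    by_cases hk : g ∈ dKeeps M ι κ R d
    · exact ⟨g, hacc, surv d g hp hk, le_refl _⟩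
    · obtain ⟨h', ha, hk', hp', hlt⟩ := kept_best hstrict hκ hacc hp hk
      exact ⟨h', ha, surv d h' hp' hk', hlt.le⟩
  intro h d hmem hacc
  rcases mem_iStep.1 hmem with hin | ⟨hp, hnk⟩
  · obtain ⟨h', ha, hp', hlt⟩ := hInv h d hin hacc
    obtain ⟨h'', ha'', hp'', hle⟩ := helper d h' ha hp'
    exact ⟨h'', ha'', hp'', lt_of_le_of_lt hle hlt⟩
  · obtain ⟨h', ha, hk', hp', hlt⟩ := kept_best hstrict hκ hacc hp hnk
    exact ⟨h', ha, surv d h' hp' hk', hlt⟩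

lemma inv_iRej {M : Market D H} (hstrict : M.Strict) {ι : H → ℕ} {κ : D → ℕ}
    (hκ : ∀ d, κ d = 1) : DAInv M ι (iRej M ι κ) := by
  show DAInv M ι ((iStep M ι κ)^[Fintype.card D * Fintype.card H] ∅)
  generalize Fintype.card D * Fintype.card H = n
  induction n with
  | zero => intro h d hmem _; simp at hmem
  | succ n ih =>
      rw [Function.iterate_succ_apply']
      exact inv_step hstrict hκ ih

lemma iter_fixed_point {α : Type*} [Fintype α] [DecidableEq α] (f : Finset α → Finset α)
    (hf : ∀ s, s ⊆ f s) : f (f^[Fintype.card α] ∅) = f^[Fintype.card α] ∅ := by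
  have key : ∀ k : ℕ, f^[k + 1] ∅ = f^[k] ∅ ∨ k ≤ (f^[k] (∅ : Finset α)).card := by
    intro k
    induction k with
    | zero => exact Or.inr (Nat.zero_le _)
    | succ k ih =>
        by_cases h1 : f^[k + 1] ∅ = f^[k] ∅
        · left
          calc f^[k + 1 + 1] ∅ = f (f^[k + 1] ∅) := Function.iterate_succ_apply' f (k + 1) ∅
            _ = f (f^[k] ∅) := congrArg f h1
            _ = f^[k + 1] ∅ := (Function.iterate_succ_apply' f k ∅).symm
        · right
          rcases ih with h | h
          · exact absurd h h1
          · have hsub : f^[k] (∅ : Finset α) ⊆ f^[k + 1] ∅ := by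
              rw [Function.iterate_succ_apply']; exact hf _
            have hss : f^[k] (∅ : Finset α) ⊂ f^[k + 1] ∅ :=
              hsub.ssubset_of_ne (Ne.symm h1)
            have := card_lt_card hss
            omega
  rcases key (Fintype.card α) with h | h
  · calc f (f^[Fintype.card α] ∅) = f^[Fintype.card α + 1] ∅ :=
        (Function.iterate_succ_apply' f (Fintype.card α) ∅).symm
      _ = f^[Fintype.card α] ∅ := h
  · have hle := card_le_univ (f^[Fintype.card α] (∅ : Finset α))
    have hcard : (f^[Fintype.card α] (∅ : Finset α)).card = Fintype.card α :=
      le_antisymm hle h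
    have huniv : f^[Fintype.card α] (∅ : Finset α) = univ := eq_univ_of_card _ hcard
    rw [huniv]
    exact (subset_univ _).antisymm (hf _)

lemma iRej_fixed (M : Market D H) (ι : H → ℕ) (κ : D → ℕ) :
    iStep M ι κ (iRej M ι κ) = iRej M ι κ := by
  have h := iter_fixed_point (α := H × D) (iStep M ι κ) (fun s => subset_union_left)
  have hc : Fintype.card (H × D) = Fintype.card D * Fintype.card H := by
    rw [Fintype.card_prod, Nat.mul_comm]
  rw [hc] at h
  exact h

lemma prop_kept {M : Market D H} {ι : H → ℕ} {κ : D → ℕ} {h : H} {d : D}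
    (hp : d ∈ hProps M ι (iRej M ι κ) h) : h ∈ dKeeps M ι κ (iRej M ι κ) d := by
  by_contra hnk
  have hmem : (h, d) ∈ iStep M ι κ (iRej M ι κ) := mem_iStep.2 (Or.inr ⟨hp, hnk⟩)
  rw [iRej_fixed] at hmem
  exact (hProps_mem hp).2 hmem

lemma mem_interviews {M : Market D H} {ι : H → ℕ} {κ : D → ℕ} {h : H} {d : D} :
    (h, d) ∈ interviews M ι κ ↔ d ∈ hProps M ι (iRej M ι κ) h := by
  simp only [interviews, mem_filter, mem_univ, true_and]
  exact ⟨fun hh => hh.1, fun hp => ⟨hp, prop_kept hp⟩⟩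

lemma hProps_unique {M : Market D H} (hstrict : M.Strict) {ι : H → ℕ} (hι : ∀ h, ι h = 1)
    {R : Finset (H × D)} {h : H} {d d' : D}
    (h1 : d ∈ hProps M ι R h) (h2 : d' ∈ hProps M ι R h) : d = d' := by
  simp only [hProps, hι] at h1 h2
  have ha : ¬ M.rankHD h d' < M.rankHD h d := topN_one_min h1 (mem_topN.1 h2).1
  have hb : ¬ M.rankHD h d < M.rankHD h d' := topN_one_min h2 (mem_topN.1 h1).1
  exact hstrict.2 h (show M.rankHD h d = M.rankHD h d' by omega)

lemma dKeeps_unique {M : Market D H} (hstrict : M.Strict) {ι : H → ℕ} {κ : D → ℕ}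
    (hκ : ∀ d, κ d = 1) {R : Finset (H × D)} {d : D} {h h' : H}
    (h1 : h ∈ dKeeps M ι κ R d) (h2 : h' ∈ dKeeps M ι κ R d) : h = h' := by
  simp only [dKeeps, hκ] at h1 h2
  have ha : ¬ M.rankDH d h' < M.rankDH d h := topN_one_min h1 (mem_topN.1 h2).1
  have hb : ¬ M.rankDH d h < M.rankDH d h' := topN_one_min h2 (mem_topN.1 h1).1
  exact hstrict.1 d (show M.rankDH d h = M.rankDH d h' by omega)

section Step2

variable {M : Market D H} {V : Finset (H × D)}

lemma dProps_mem {S : Finset (D × H)} {d : D} {h : H} (h1 : h ∈ dProps M V S d) :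
    (h, d) ∈ V ∧ (d, h) ∉ S := by
  have := (mem_topN.1 (by simpa only [dProps] using h1)).1
  simpa using this

lemma dProps_empty_of_V (hVd : ∀ h h' d, (h, d) ∈ V → (h', d) ∈ V → h = h')
    {h : H} {d : D} (hd : (h, d) ∈ V) : h ∈ dProps M V ∅ d := by
  simp only [dProps]
  refine mem_topN.2 ⟨by simp [hd], ?_⟩
  have hemp : ((univ.filter fun h' : H => (h', d) ∈ V ∧ (d, h') ∉ (∅ : Finset (D × H))).filter
      fun y => M.rankDH d y < M.rankDH d h) = ∅ := by
    refine filter_eq_empty_iff.2 ?_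
    intro y hy hlt
    simp only [mem_filter, mem_univ, true_and, notMem_empty, not_false_iff, and_true] at hy
    rw [hVd y h d hy hd] at hlt
    exact lt_irrefl _ hlt
  rw [hemp]
  simp

lemma hKeeps_of_dProps (hVh : ∀ h d d', (h, d) ∈ V → (h, d') ∈ V → d = d')
    {h : H} {d : D} (hd : h ∈ dProps M V ∅ d) : d ∈ hKeeps M V ∅ h := by
  have hVmem : (h, d) ∈ V := (dProps_mem hd).1
  simp only [hKeeps]
  refine mem_topN.2 ⟨by simp [hd], ?_⟩
  have hemp : ((univ.filter fun d' : D => h ∈ dProps M V ∅ d').filter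
      fun y => M.rankHD h y < M.rankHD h d) = ∅ := by
    refine filter_eq_empty_iff.2 ?_
    intro y hy hlt
    simp only [mem_filter, mem_univ, true_and] at hy
    have hyV : (h, y) ∈ V := (dProps_mem hy).1
    rw [hVh h y d hyV hVmem] at hlt
    exact lt_irrefl _ hlt
  rw [hemp]
  simp

lemma mStep_empty (hVh : ∀ h d d', (h, d) ∈ V → (h, d') ∈ V → d = d') :
    mStep M V ∅ = ∅ := by
  simp only [mStep, empty_union]
  refine filter_eq_empty_iff.2 ?_
  rintro p - ⟨h1, h2⟩
  exact h2 (hKeeps_of_dProps hVh h1)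

lemma mRej_empty (hVh : ∀ h d d', (h, d) ∈ V → (h, d') ∈ V → d = d') :
    mRej M V = ∅ :=
  Function.iterate_fixed (mStep_empty hVh) _

lemma mem_finalMatch (hVd : ∀ h h' d, (h, d) ∈ V → (h', d) ∈ V → h = h')
    (hVh : ∀ h d d', (h, d) ∈ V → (h, d') ∈ V → d = d') (d : D) (h : H) :
    (d, h) ∈ finalMatch M V ↔ (h, d) ∈ V := by
  simp only [finalMatch, mem_filter, mem_univ, true_and, mRej_empty hVh]
  constructor
  · intro hx
    exact (dProps_mem hx.1).1
  · intro hv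
    have hp : h ∈ dProps M V ∅ d := dProps_empty_of_V hVd hv
    exact ⟨hp, hKeeps_of_dProps hVh hp⟩

end Step2

end Aux

variable {D H : Type*} [Fintype D] [Fintype H] [DecidableEq D] [DecidableEq H]

/-- If every doctor and every hospital has interview capacity exactly
one, then the arrangement is globally adequate. -/
theorem unit_capacities_globally_adequate
    (ι : H → ℕ) (κ : D → ℕ) (hι : ∀ h : H, ι h = 1) (hκ : ∀ d : D, κ d = 1) :
    GloballyAdequate D H ι κ := by
  intro M hstrict
  have hInv : DAInv M ι (iRej M ι κ) := inv_iRej hstrict hκ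
  have hVmem : ∀ h d, (h, d) ∈ interviews M ι κ ↔ d ∈ hProps M ι (iRej M ι κ) h :=
    fun h d => mem_interviews
  have hVkeep : ∀ h d, (h, d) ∈ interviews M ι κ → h ∈ dKeeps M ι κ (iRej M ι κ) d :=
    fun h d hv => prop_kept ((hVmem h d).1 hv)
  have hVd : ∀ h h' d, (h, d) ∈ interviews M ι κ → (h', d) ∈ interviews M ι κ → h = h' :=
    fun h h' d a b => dKeeps_unique hstrict hκ (hVkeep _ _ a) (hVkeep _ _ b)
  have hVh : ∀ h d d', (h, d) ∈ interviews M ι κ → (h, d') ∈ interviews M ι κ → d = d' :=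
    fun h d d' a b => hProps_unique hstrict hι ((hVmem _ _).1 a) ((hVmem _ _).1 b)
  have hμ : ∀ (d : D) (h : H), (d, h) ∈ ikMatching M ι κ ↔ (h, d) ∈ interviews M ι κ :=
    fun d h => mem_finalMatch hVd hVh d h
  intro d h hblock
  obtain ⟨haccD, haccH, hnot, hbd, hbh⟩ := hblock
  have hRmem : (h, d) ∈ iRej M ι κ := by
    by_contra hnR
    have hdS : d ∈ univ.filter fun d' : D => M.accH h d' ∧ (h, d') ∉ iRej M ι κ := by
      simp [haccH, hnR]
    have hne : (hProps M ι (iRej M ι κ) h).Nonempty := by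
      simp only [hProps, hι]
      exact topN_nonempty ⟨d, hdS⟩ one_pos
    obtain ⟨d', hd'⟩ := hne
    by_cases he : d' = d
    · exact hnot ((hμ d h).2 ((hVmem h d).2 (he ▸ hd')))
    · have hμ' : (d', h) ∈ ikMatching M ι κ := (hμ d' h).2 ((hVmem h d').2 hd')
      have hlt := hbh d' hμ'
      have hmin : ¬ M.rankHD h d < M.rankHD h d' :=
        topN_one_min (by simpa only [hProps, hι] using hd') hdS
      exact hmin hlt
  obtain ⟨h', ha', hp', hlt⟩ := hInv h d hRmem haccD
  have hμ' : (d, h') ∈ ikMatching M ι κ := (hμ d h').2 ((hVmem h' d).2 hp')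
  have := hbd h' hμ'
  omega
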